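/- The pair u₀(t,x) = x/t, u₁(t,x) = k₁/(t x³) + k₂/t − x/6 gives a first-order approximate solution of the damped nonlinear wave equation u_tt − (u² u_x)_x + ε u_t = 0, in the sense that substituting u = u₀ + ε u₁ into the equation, the coefficients of ε⁰ and ε¹ both vanish identically (for t, x ≠ 0). -/

import Mathlib

/-!
In `t`, both `u₀ = x/t` and `u₁ = (k₁/x³ + k₂)/t − x/6` have the form `a/t + b`, so their second
time derivatives are `2a/t³`. In `x`, the two fluxes are Laurent polynomials:
`u₀² ∂ₓu₀ = x²/t³` and `u₀² ∂ₓu₁ + 2u₀u₁ ∂ₓu₀ = −k₁/(t³x²) + 2k₂x/t³ − x²/(2t²)`.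
Their derivatives `2x/t³` and `2(k₁/x³ + k₂)/t³ − x/t²` cancel the time terms exactly.
-/

/-- `u₀(t,x) = x/t`. -/
noncomputable def u0nlw : ℝ → ℝ → ℝ := fun t x => x / t

/-- `u₁(t,x) = k₁/(t x³) + k₂/t − x/6`. -/
noncomputable def u1nlw (k₁ k₂ : ℝ) : ℝ → ℝ → ℝ :=
  fun t x => k₁ / (t * x ^ 3) + k₂ / t - x / 6

open Filter Topology

theorem hasDerivAt_const_div_pow {𝕜 : Type*} [NontriviallyNormedField 𝕜] (c : 𝕜) (n : ℕ)
    {x : 𝕜} (hx : x ≠ 0) :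
    HasDerivAt (fun y => c / y ^ n) (-(n * c) / x ^ (n + 1)) x := by
  refine ((hasDerivAt_const x c).fun_div (hasDerivAt_pow n x) (pow_ne_zero n hx)).congr_deriv ?_
  rcases n with _ | n
  · simp
  · rw [Nat.add_sub_cancel]
    field_simp
    ring

theorem deriv_u0nlw_time (x : ℝ) : deriv (fun s => u0nlw s x) = fun s => -x / s ^ 2 := by
  ext s
  simp only [u0nlw, deriv_const_div_id]

theorem deriv_u1nlw_time (k₁ k₂ x : ℝ) :
    deriv (fun s => u1nlw k₁ k₂ s x) = fun s => -(k₁ / x ^ 3 + k₂) / s ^ 2 := by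
  have hu : (fun s => u1nlw k₁ k₂ s x) = fun s => (k₁ / x ^ 3 + k₂) / s - x / 6 := by
    ext s
    rw [u1nlw]
    ring
  ext s
  rw [hu, deriv_sub_const, deriv_const_div_id]

theorem deriv_u0nlw_space (t x : ℝ) : deriv (fun y => u0nlw t y) x = 1 / t := by
  simp [u0nlw]

theorem hasDerivAt_u1nlw_space (k₁ k₂ t : ℝ) {x : ℝ} (hx : x ≠ 0) :
    HasDerivAt (fun y => u1nlw k₁ k₂ t y) (-3 * k₁ / (t * x ^ 4) - 1 / 6) x := by
  have hu : (fun y => u1nlw k₁ k₂ t y) = fun y => k₁ / t / y ^ 3 + k₂ / t - y / 6 := by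
    ext y
    rw [u1nlw, div_div]
  rw [hu]
  refine (((hasDerivAt_const_div_pow (k₁ / t) 3 hx).add_const (k₂ / t)).fun_sub
    ((hasDerivAt_id' x).div_const 6)).congr_deriv ?_
  push_cast
  ring

theorem deriv_zerothOrderFlux (t x : ℝ) :
    deriv (fun x' => u0nlw t x' ^ 2 * deriv (fun y => u0nlw t y) x') x = 2 * x / t ^ 3 := by
  have hflux : (fun x' => u0nlw t x' ^ 2 * deriv (fun y => u0nlw t y) x') =
      fun y => y ^ 2 / t ^ 3 := by
    ext y
    rw [deriv_u0nlw_space, u0nlw]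
    ring
  rw [hflux, deriv_div_const, deriv_pow_field]
  ring

theorem firstOrderFlux_eq (k₁ k₂ : ℝ) {t x : ℝ} (ht : t ≠ 0) (hx : x ≠ 0) :
    u0nlw t x ^ 2 * deriv (fun y => u1nlw k₁ k₂ t y) x
        + 2 * u0nlw t x * u1nlw k₁ k₂ t x * deriv (fun y => u0nlw t y) x =
      -k₁ / t ^ 3 / x ^ 2 + 2 * k₂ / t ^ 3 * x - x ^ 2 / (2 * t ^ 2) := by
  rw [(hasDerivAt_u1nlw_space k₁ k₂ t hx).deriv, deriv_u0nlw_space, u0nlw, u1nlw]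
  field_simp
  ring

theorem deriv_firstOrderFlux (k₁ k₂ : ℝ) {t x : ℝ} (ht : t ≠ 0) (hx : x ≠ 0) :
    deriv (fun x' => u0nlw t x' ^ 2 * deriv (fun y => u1nlw k₁ k₂ t y) x'
        + 2 * u0nlw t x' * u1nlw k₁ k₂ t x' * deriv (fun y => u0nlw t y) x') x =
      2 * (k₁ / x ^ 3 + k₂) / t ^ 3 - x / t ^ 2 := by
  have hflux : (fun x' => u0nlw t x' ^ 2 * deriv (fun y => u1nlw k₁ k₂ t y) x'
        + 2 * u0nlw t x' * u1nlw k₁ k₂ t x' * deriv (fun y => u0nlw t y) x') =ᶠ[𝓝 x]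
      fun y => -k₁ / t ^ 3 / y ^ 2 + 2 * k₂ / t ^ 3 * y - y ^ 2 / (2 * t ^ 2) := by
    filter_upwards [isOpen_ne.mem_nhds hx] with y hy
    exact firstOrderFlux_eq k₁ k₂ ht hy
  have hderiv := ((hasDerivAt_const_div_pow (-k₁ / t ^ 3) 2 hx).fun_add
    ((hasDerivAt_id' x).const_mul (2 * k₂ / t ^ 3))).fun_sub
    ((hasDerivAt_pow 2 x).div_const (2 * t ^ 2))
  rw [hflux.deriv_eq, hderiv.deriv]
  push_cast
  field_simp

/-- The pair `u₀ = x/t`, `u₁ = k₁/(t x³) + k₂/t − x/6` is a first-order approximate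
solution of `u_tt − (u² u_x)_x + ε u_t = 0`: both the `ε⁰` and `ε¹` coefficients of
the expanded equation vanish for `t ≠ 0`, `x ≠ 0`. -/
theorem stmt11 (k₁ k₂ : ℝ) (t x : ℝ) (ht : t ≠ 0) (hx : x ≠ 0) :
    -- ε⁰ coefficient: ∂²u₀/∂t² − ∂/∂x (u₀² ∂u₀/∂x) = 0
    (deriv (deriv (fun t' => u0nlw t' x)) t
      - deriv (fun x' => (u0nlw t x') ^ 2 * deriv (fun y => u0nlw t y) x') x = 0)
    ∧
    -- ε¹ coefficient: ∂²u₁/∂t² − ∂/∂x (u₀² ∂u₁/∂x + 2u₀u₁ ∂u₀/∂x) + ∂u₀/∂t = 0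
    (deriv (deriv (fun t' => u1nlw k₁ k₂ t' x)) t
      - deriv (fun x' => (u0nlw t x') ^ 2 * deriv (fun y => u1nlw k₁ k₂ t y) x'
          + 2 * u0nlw t x' * u1nlw k₁ k₂ t x' * deriv (fun y => u0nlw t y) x') x
      + deriv (fun t' => u0nlw t' x) t = 0) := by
  constructor
  · rw [deriv_u0nlw_time, (hasDerivAt_const_div_pow _ 2 ht).deriv, deriv_zerothOrderFlux]
    push_cast
    ring
  · rw [deriv_u1nlw_time, (hasDerivAt_const_div_pow _ 2 ht).deriv,
      deriv_firstOrderFlux k₁ k₂ ht hx, deriv_u0nlw_time]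
    push_cast
    ring
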